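/- Fix d ≥ 1 and α > 0, and suppose (Y_n)_{n≥1} are differentiable real functions on an interval I satisfying Y_n'(t) = 2^d·2^{(α−d/2)n} Y_{n−1}(t)² − 2^d·2^{(α−d/2)(n+1)} Y_n(t) Y_{n+1}(t) for all n ≥ 1, with Y_0 ≡ 0. Define X_j(t) := 2^{−d|j|/2} Y_{|j|}(t) for every word j ∈ J (nonempty) and X for the root via Y at level 0. Then (X_j)_{j∈J} is a componentwise solution of the unforced inviscid KP tree model with coefficients c_j = 2^{α|j|}, and moreover Σ_{j∈J} X_j(t)² = Σ_{n} Y_n(t)² for every t ∈ I. -/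

import Mathlib

/-!
All `2^(d n)` nodes of level `n` carry the same value `2^(-d n/2) Y_n`. Hence the sum over the
`2^d` children of a node is `2^d` times a single term, and the KP equation at a node of level
`n ≥ 1` is `2^(-d n/2)` times the shell equation for `Y_n`; at the root both sides vanish since
`Y_0 ≡ 0`. For the energy, level `n` contributes `2^(d n) · 2^(-d n) Y_n² = Y_n²`, and the
regrouping of the series by levels is legitimate because its terms are nonnegative.
-/

open Set

namespace Stmt10

/-- Nodes of the `2^d`-ary tree: finite words over an alphabet with `2^d` letters.
The root is the empty word, the parent of `a :: j` is `j`, and the children of `j`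
are the words `a :: j` for `a : Fin (2^d)`. -/
abbrev Word (d : ℕ) := List (Fin (2 ^ d))

/-- The coefficient `c_j = 2^(α |j|)`. -/
noncomputable def coef (α : ℝ) {d : ℕ} (j : Word d) : ℝ := (2 : ℝ) ^ (α * (j.length : ℝ))

/-- The value at the parent node, with the convention that the (fictitious) parent of the
root carries the value `f`. -/
def parentVal {d : ℕ} (f : ℝ) (X : Word d → ℝ) : Word d → ℝ
  | [] => f
  | _ :: j => X j

/-- The lift `X_j(t) = 2^(−d|j|/2) Y_{|j|}(t)` of a shell family to the tree
(the root, of level `0`, is given by `Y` at level `0`). -/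
noncomputable def liftX (d : ℕ) (Y : ℕ → ℝ → ℝ) (j : Word d) (t : ℝ) : ℝ :=
  (2 : ℝ) ^ (-((d : ℝ) * (j.length : ℝ)) / 2) * Y j.length t

theorem tsum_sigma_of_nonneg {α : Type*} {β : α → Type*} {f : (Σ x, β x) → ℝ}
    (hf : ∀ p, 0 ≤ f p) (hfib : ∀ x, Summable fun y => f ⟨x, y⟩) :
    ∑' p, f p = ∑' x, ∑' y, f ⟨x, y⟩ := by
  by_cases hs : Summable f
  · exact hs.tsum_sigma' hfib
  · rw [tsum_eq_zero_of_not_summable hs, tsum_eq_zero_of_not_summable]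
    exact fun h => hs ((summable_sigma_of_nonneg hf).2 ⟨hfib, h⟩)

theorem List.tsum_comp_length {α : Type*} [Fintype α] {f : ℕ → ℝ} (hf : ∀ n, 0 ≤ f n) :
    ∑' l : List α, f l.length = ∑' n, (Fintype.card α : ℝ) ^ n * f n := by
  rw [← List.equivSigmaTuple.symm.tsum_eq, tsum_sigma_of_nonneg (fun _ => hf _)
    (fun _ => .of_finite)]
  simp [List.equivSigmaTuple, tsum_fintype]

noncomputable def shellRhs (d : ℕ) (α : ℝ) (Y : ℕ → ℝ → ℝ) (n : ℕ) (t : ℝ) : ℝ :=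
  (2 : ℝ) ^ (d : ℝ) * (2 : ℝ) ^ ((α - (d : ℝ) / 2) * (n : ℝ)) * (Y (n - 1) t) ^ 2
    - (2 : ℝ) ^ (d : ℝ) * (2 : ℝ) ^ ((α - (d : ℝ) / 2) * ((n : ℝ) + 1))
      * Y n t * Y (n + 1) t

noncomputable def kpRhs (α : ℝ) {d : ℕ} (X : Word d → ℝ) (j : Word d) : ℝ :=
  coef α j * parentVal 0 X j ^ 2 - X j * ∑ a : Fin (2 ^ d), coef α (a :: j) * X (a :: j)

variable {d : ℕ} {Y : ℕ → ℝ → ℝ}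

theorem sq_liftX (j : Word d) (t : ℝ) :
    liftX d Y j t ^ 2 = (((2 : ℝ) ^ d) ^ j.length)⁻¹ * Y j.length t ^ 2 := by
  have h : ((2 : ℝ) ^ (-((d : ℝ) * j.length) / 2)) ^ 2 = (((2 : ℝ) ^ d) ^ j.length)⁻¹ := by
    rw [← Real.rpow_mul_natCast zero_le_two, ← pow_mul, ← Real.rpow_natCast,
      ← Real.rpow_neg zero_le_two]
    push_cast
    ring_nf
  rw [liftX, mul_pow, h]

theorem tsum_sq_liftX (t : ℝ) : ∑' j : Word d, liftX d Y j t ^ 2 = ∑' n, Y n t ^ 2 := by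
  simp_rw [sq_liftX]
  refine (List.tsum_comp_length (f := fun n => (((2 : ℝ) ^ d) ^ n)⁻¹ * Y n t ^ 2)
    (fun n => by positivity)).trans (tsum_congr fun n => ?_)
  rw [Fintype.card_fin, Nat.cast_pow, Nat.cast_ofNat, mul_inv_cancel_left₀ (by positivity)]

@[simp]
theorem liftX_nil (t : ℝ) : liftX d Y [] t = Y 0 t := by
  simp [liftX]

theorem kpRhs_liftX_nil (α : ℝ) (hY0 : ∀ t, Y 0 t = 0) (t : ℝ) :
    kpRhs α (fun i => liftX d Y i t) [] = 0 := by
  simp [kpRhs, parentVal, hY0]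

theorem kpRhs_liftX_cons (α : ℝ) (a : Fin (2 ^ d)) (l : Word d) (t : ℝ) :
    kpRhs α (fun i => liftX d Y i t) (a :: l)
      = (2 : ℝ) ^ (-((d : ℝ) * (l.length + 1 : ℕ)) / 2)
        * shellRhs d α Y (l.length + 1) t := by
  set n : ℕ := l.length with hn
  have hparent : (2 : ℝ) ^ (α * (n + 1)) * ((2 : ℝ) ^ (-(d * n : ℝ) / 2)) ^ 2
      = (2 : ℝ) ^ (-(d * (n + 1) : ℝ) / 2)
        * ((2 : ℝ) ^ (d : ℝ) * (2 : ℝ) ^ ((α - d / 2) * (n + 1))) := by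
    simp only [sq, ← Real.rpow_add two_pos]
    ring_nf
  have hchild : (2 : ℝ) ^ (α * (n + 1 + 1)) * (2 : ℝ) ^ (-(d * (n + 1 + 1) : ℝ) / 2)
      = (2 : ℝ) ^ ((α - d / 2) * (n + 1 + 1)) := by
    simp only [← Real.rpow_add two_pos]
    ring_nf
  simp only [kpRhs, shellRhs, parentVal, liftX, coef, List.length_cons, ← hn, Finset.sum_const,
    Finset.card_univ, Fintype.card_fin, nsmul_eq_mul, Nat.add_sub_cancel]
  push_cast
  rw [← Real.rpow_natCast 2 d]
  linear_combination Y n t ^ 2 * hparent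
    - (2 : ℝ) ^ (-(d * (n + 1) : ℝ) / 2) * (2 : ℝ) ^ (d : ℝ) * Y (n + 1) t * Y (n + 1 + 1) t
      * hchild

theorem dn_lifts_to_kp (d : ℕ) (α : ℝ) (I : Set ℝ)
    (Y : ℕ → ℝ → ℝ) (hY0 : ∀ t, Y 0 t = 0)
    (hY : ∀ n : ℕ, 1 ≤ n → ∀ t ∈ I,
      HasDerivWithinAt (Y n)
        ((2 : ℝ) ^ (d : ℝ) * (2 : ℝ) ^ ((α - (d : ℝ) / 2) * (n : ℝ)) * (Y (n - 1) t) ^ 2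
          - (2 : ℝ) ^ (d : ℝ) * (2 : ℝ) ^ ((α - (d : ℝ) / 2) * ((n : ℝ) + 1))
            * Y n t * Y (n + 1) t)
        I t) :
    (∀ j : Word d, ∀ t ∈ I,
      HasDerivWithinAt (fun s => liftX d Y j s)
        (coef α j * (parentVal 0 (fun i => liftX d Y i t) j) ^ 2
          - liftX d Y j t * ∑ a : Fin (2 ^ d), coef α (a :: j) * liftX d Y (a :: j) t)
        I t) ∧
    (∀ t ∈ I, ∑' j : Word d, (liftX d Y j t) ^ 2 = ∑' n : ℕ, (Y n t) ^ 2) := by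
  refine ⟨fun j t ht => ?_, fun t _ => tsum_sq_liftX t⟩
  change HasDerivWithinAt _ (kpRhs α (fun i => liftX d Y i t) j) I t
  cases j with
  | nil =>
    rw [kpRhs_liftX_nil α hY0]
    simpa [hY0] using hasDerivWithinAt_const t I (0 : ℝ)
  | cons a l =>
    rw [kpRhs_liftX_cons]
    exact (hY _ l.length.succ_pos t ht).const_mul _

end Stmt10
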